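/- Let A be an m×n real matrix with m > n > 1 and full column rank. If the diagonal entries of (AᵀA)⁻¹ are the reciprocals of the corresponding diagonal entries of AᵀA, i.e. ((AᵀA)⁻¹)_{ii} · (AᵀA)_{ii} = 1 for every i, then all off-diagonal entries of AᵀA are zero (AᵀA is diagonal), and consequently (AᵀA)⁻¹ is diagonal as well. -/

import Mathlib

/-!
Write `G = AᵀA`, which is positive definite, `e = eᵢ` and `c = Gᵢᵢ`. For `v = c • G⁻¹ e - e` one
computes `vᵀ G v = c (c (G⁻¹)ᵢᵢ - 1) = 0`, so `v = 0`, i.e. `G e = c e`: the `i`-th column of `G`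
vanishes off the diagonal. Hence `G` is diagonal, and so is its inverse.
-/

open Matrix

namespace Matrix

variable {ι : Type*} [Fintype ι]

theorem mulVec_injective_of_rank_eq_card {K m : Type*} [Field K] [Fintype m] (A : Matrix m ι K)
    (hA : A.rank = Fintype.card ι) : Function.Injective A.mulVec := by
  rw [← coe_mulVecLin, ← LinearMap.ker_eq_bot, ← Submodule.finrank_eq_zero]
  have := A.mulVecLin.finrank_range_add_finrank_ker
  rw [← rank, hA, Module.finrank_fintype_fun_eq_card] at this
  omega

variable [DecidableEq ι]

theorem IsDiag.inv {K : Type*} [CommRing K] {D : Matrix ι ι K} (hD : D.IsDiag) : D⁻¹.IsDiag := by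
  rw [← hD.diagonal_diag, inv_diagonal]
  exact isDiag_diagonal _

theorem PosDef.mulVec_single_eq_of_inv_apply_mul_apply_eq_one {G : Matrix ι ι ℝ} (hG : G.PosDef)
    {i : ι} (h : G⁻¹ i i * G i i = 1) :
    G *ᵥ Pi.single i 1 = G i i • Pi.single i 1 := by
  set e : ι → ℝ := Pi.single i 1
  set c := G i i
  have hdet : IsUnit G.det := (isUnit_iff_isUnit_det G).mp hG.isUnit
  have hinv_symm : (G⁻¹)ᵀ = G⁻¹ := by
    rw [transpose_nonsing_inv, ← conjTranspose_eq_transpose_of_trivial, hG.isHermitian.eq]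
  set v := c • (G⁻¹ *ᵥ e) - e
  have hGv : G *ᵥ v = c • e - G *ᵥ e := by
    simp only [v, mulVec_sub, mulVec_smul, mulVec_mulVec, mul_nonsing_inv G hdet, one_mulVec]
  have hquad : v ⬝ᵥ (G *ᵥ v) = 0 := by
    have hinv_e : (G⁻¹ *ᵥ e) ⬝ᵥ (G *ᵥ e) = 1 := by
      rw [dotProduct_comm, dotProduct_mulVec, ← hinv_symm, vecMul_transpose, mulVec_mulVec,
        nonsing_inv_mul G hdet, one_mulVec]
      simp [e]
    have hee : e ⬝ᵥ e = 1 := by simp [e]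
    have heGe : e ⬝ᵥ (G *ᵥ e) = c := by simp [e, c]
    have hinv_ee : (G⁻¹ *ᵥ e) ⬝ᵥ e = G⁻¹ i i := by simp [e]
    simp only [hGv, v, sub_dotProduct, dotProduct_sub, smul_dotProduct, dotProduct_smul,
      smul_eq_mul, hee, heGe, hinv_ee, hinv_e]
    linear_combination c * h
  have hv : v = 0 := by
    by_contra hv
    simpa [hquad] using hG.dotProduct_mulVec_pos hv
  rw [hv, mulVec_zero, eq_comm, sub_eq_zero] at hGv
  exact hGv.symm

theorem PosDef.isDiag_of_inv_apply_mul_apply_eq_one {G : Matrix ι ι ℝ} (hG : G.PosDef)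
    (h : ∀ i, G⁻¹ i i * G i i = 1) : G.IsDiag := by
  intro i j hij
  simpa [mulVec_single, Pi.single_eq_of_ne hij] using
    congrFun (hG.mulVec_single_eq_of_inv_apply_mul_apply_eq_one (h j)) i

end Matrix

theorem stmt_2_general {m n : ℕ}
    (A : Matrix (Fin m) (Fin n) ℝ) (hrank : A.rank = n)
    (h : ∀ i : Fin n, (Aᵀ * A)⁻¹ i i * (Aᵀ * A) i i = 1) :
    (Aᵀ * A).IsDiag ∧ ((Aᵀ * A)⁻¹).IsDiag := by
  have hinj : Function.Injective A.mulVec :=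
    A.mulVec_injective_of_rank_eq_card (by rw [hrank, Fintype.card_fin])
  have hpos : (Aᵀ * A).PosDef := by
    simpa only [conjTranspose_eq_transpose_of_trivial] using PosDef.conjTranspose_mul_self A hinj
  have hdiag := hpos.isDiag_of_inv_apply_mul_apply_eq_one h
  exact ⟨hdiag, hdiag.inv⟩

theorem stmt_2 {m n : ℕ} (hmn : n < m) (hn : 1 < n)
    (A : Matrix (Fin m) (Fin n) ℝ) (hrank : A.rank = n)
    (h : ∀ i : Fin n, (Aᵀ * A)⁻¹ i i * (Aᵀ * A) i i = 1) :
    (Aᵀ * A).IsDiag ∧ ((Aᵀ * A)⁻¹).IsDiag :=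
  stmt_2_general A hrank h
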